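/- arXiv:2208.01914 — 2 statements merged into one kernel-verified Lean document; each statement's English description precedes it below -/
import Mathlib

section
/- Let G be a finite simple graph on a vertex set V with |V| = n ≥ 4 and with m edges, and let c = (c_1, …, c_s) be a profile. Under the random coloring model with profile c, for any two distinct colors i ≠ j in {1, …, s}, E[M_i · M_j] = 2 · (c_i^(2) c_j^(2) / n^(4)) · ( binom(m,2) − π₃(G) ). -/
open Finset

/-- The set of colorings of `V` with `s` colors and profile `c` (fiber of color `i` has `c i`
vertices). -/
def profileColorings (V : Type*) [Fintype V] [DecidableEq V] (s : ℕ) (c : Fin s → ℕ) :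
    Finset (V → Fin s) :=
  Finset.univ.filter fun f => ∀ i, (Finset.univ.filter fun v => f v = i).card = c i

/-- `monoEdges G f i` is the number of edges of `G` both of whose endpoints get color `i`
under `f`. -/
def monoEdges {V : Type*} [Fintype V] [DecidableEq V] (G : SimpleGraph V) [DecidableRel G.Adj]
    {s : ℕ} (f : V → Fin s) (i : Fin s) : ℕ :=
  (G.edgeFinset.filter fun e => ∀ v ∈ e, f v = i).card

/-- Number of unordered pairs of distinct edges of `G` sharing a vertex. -/
def pi3 {V : Type*} [Fintype V] [DecidableEq V] (G : SimpleGraph V) [DecidableRel G.Adj] : ℕ :=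
  ((G.edgeFinset.powersetCard 2).filter fun p => ∃ v, ∀ e ∈ p, v ∈ e).card

/-- The invariant `γ(G)`. -/
noncomputable def gammaG {V : Type*} [Fintype V] [DecidableEq V] (G : SimpleGraph V)
    [DecidableRel G.Adj] : ℝ :=
  2 / ((Fintype.card V).descFactorial 4) * ((G.edgeFinset.card.choose 2 : ℝ) - pi3 G)
    - ((G.edgeFinset.card : ℝ) / ((Fintype.card V).descFactorial 2)) ^ 2

/-- Expectation under the uniform measure on colorings of profile `c` (random coloring model). -/
noncomputable def expect (V : Type*) [Fintype V] [DecidableEq V] {s : ℕ} (c : Fin s → ℕ)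
    (X : (V → Fin s) → ℝ) : ℝ :=
  (∑ f ∈ profileColorings V s c, X f) / (profileColorings V s c).card

section Aux

open Finset

/-! ### Auxiliary lemmas -/

private def quadEmb {V : Type*} (a b x y : V) (h1 : a ≠ b) (h2 : a ≠ x) (h3 : a ≠ y)
    (h4 : b ≠ x) (h5 : b ≠ y) (h6 : x ≠ y) : Fin 4 ↪ V :=
  ⟨![a, b, x, y], by
    intro k l hkl
    fin_cases k <;> fin_cases l <;> simp_all⟩

private lemma quadEmb_apply0 {V : Type*} (a b x y : V) (h1 h2 h3 h4 h5 h6) :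
    quadEmb a b x y h1 h2 h3 h4 h5 h6 0 = a := rfl
private lemma quadEmb_apply1 {V : Type*} (a b x y : V) (h1 h2 h3 h4 h5 h6) :
    quadEmb a b x y h1 h2 h3 h4 h5 h6 1 = b := rfl
private lemma quadEmb_apply2 {V : Type*} (a b x y : V) (h1 h2 h3 h4 h5 h6) :
    quadEmb a b x y h1 h2 h3 h4 h5 h6 2 = x := rfl
private lemma quadEmb_apply3 {V : Type*} (a b x y : V) (h1 h2 h3 h4 h5 h6) :
    quadEmb a b x y h1 h2 h3 h4 h5 h6 3 = y := rfl

private def quadEmb' {V : Type*} {s : ℕ} (f : V → Fin s) (i j : Fin s) (hij : i ≠ j) (a b x y : V)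
    (ha : f a = i) (hb : f b = i) (hx : f x = j) (hy : f y = j)
    (hab : a ≠ b) (hxy : x ≠ y) : Fin 4 ↪ V :=
  quadEmb a b x y hab (fun h => hij (by rw [← ha, h, hx])) (fun h => hij (by rw [← ha, h, hy]))
    (fun h => hij (by rw [← hb, h, hx])) (fun h => hij (by rw [← hb, h, hy])) hxy

private lemma sq_sub_self' (c : ℕ) : c * c - c = c.descFactorial 2 := by
  cases c with
  | zero => rfl
  | succ k => simp [Nat.descFactorial, Nat.mul_succ, Nat.succ_mul]

private lemma card_quad {V : Type*} [Fintype V] [DecidableEq V] {s : ℕ} (f : V → Fin s)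
    (i j : Fin s) (hij : i ≠ j) :
    (univ.filter fun t : Fin 4 ↪ V =>
        f (t 0) = i ∧ f (t 1) = i ∧ f (t 2) = j ∧ f (t 3) = j).card
      = (univ.filter fun v => f v = i).card.descFactorial 2
        * (univ.filter fun v => f v = j).card.descFactorial 2 := by
  rw [← sq_sub_self', ← sq_sub_self', ← Finset.offDiag_card, ← Finset.offDiag_card,
    ← Finset.card_product]
  apply Finset.card_bij (fun t _ => ((t 0, t 1), (t 2, t 3)))
  · intro t ht
    simp only [mem_filter, mem_univ, true_and] at ht
    simp only [Finset.mem_product, Finset.mem_offDiag, mem_filter, mem_univ, true_and]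
    exact ⟨⟨ht.1, ht.2.1, fun h => (by decide : (0 : Fin 4) ≠ 1) (t.injective h)⟩,
      ⟨ht.2.2.1, ht.2.2.2, fun h => (by decide : (2 : Fin 4) ≠ 3) (t.injective h)⟩⟩
  · intro t1 h1 t2 h2 heq
    simp only [Prod.mk.injEq] at heq
    ext k
    fin_cases k
    · exact heq.1.1
    · exact heq.1.2
    · exact heq.2.1
    · exact heq.2.2
  · rintro ⟨⟨a, b⟩, ⟨x, y⟩⟩ hp
    simp only [Finset.mem_product, Finset.mem_offDiag, mem_filter, mem_univ, true_and] at hp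
    obtain ⟨⟨ha, hb, hab⟩, ⟨hx, hy, hxy⟩⟩ := hp
    refine ⟨quadEmb' f i j hij a b x y ha hb hx hy hab hxy, ?_, rfl⟩
    simp only [mem_filter, mem_univ, true_and]
    exact ⟨ha, hb, hx, hy⟩

private lemma comp_perm_mem {V : Type*} [Fintype V] [DecidableEq V] {s : ℕ} {c : Fin s → ℕ}
    (σ : Equiv.Perm V) {f : V → Fin s} (hf : f ∈ profileColorings V s c) :
    f ∘ σ ∈ profileColorings V s c := by
  simp only [profileColorings, mem_filter, mem_univ, true_and] at hf ⊢
  intro i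
  rw [← hf i]
  apply Finset.card_bij (fun v _ => σ v)
  · intro v hv
    simp only [mem_filter, mem_univ, true_and, Function.comp_apply] at hv ⊢
    exact hv
  · exact fun a _ b _ h => σ.injective h
  · intro w hw
    refine ⟨σ.symm w, ?_, by simp⟩
    simp only [mem_filter, mem_univ, true_and, Function.comp_apply, Equiv.apply_symm_apply] at hw ⊢
    exact hw

private def Kcount (V : Type*) [Fintype V] [DecidableEq V] {s : ℕ} (c : Fin s → ℕ) (i j : Fin s)
    (t : Fin 4 ↪ V) : ℕ :=
  ((profileColorings V s c).filter fun f =>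
    f (t 0) = i ∧ f (t 1) = i ∧ f (t 2) = j ∧ f (t 3) = j).card

private lemma exists_perm_comp {V : Type*} [Fintype V] [DecidableEq V] {α : Type*} [Fintype α]
    (a b : α ↪ V) : ∃ σ : Equiv.Perm V, ∀ k, σ (a k) = b k := by
  classical
  have hca : Fintype.card (Set.range a) = Fintype.card α := Set.card_range_of_injective a.injective
  have hcb : Fintype.card (Set.range b) = Fintype.card α := Set.card_range_of_injective b.injective
  have eCompl : {x // ¬ x ∈ Set.range a} ≃ {x // ¬ x ∈ Set.range b} := by
    apply Fintype.equivOfCardEq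
    rw [Fintype.card_subtype_compl, Fintype.card_subtype_compl]
    congr 1
    exact hca.trans hcb.symm
  refine ⟨Equiv.subtypeCongr
    ((Equiv.ofInjective a a.injective).symm.trans (Equiv.ofInjective b b.injective)) eCompl,
    fun k => ?_⟩
  have h : a k ∈ Set.range a := ⟨k, rfl⟩
  simp only [Equiv.subtypeCongr, Equiv.trans_apply, Equiv.sumCompl_symm_apply_of_pos h,
    Equiv.sumCongr_apply, Sum.map_inl, Equiv.sumCompl_apply_inl]
  show ((Equiv.ofInjective b b.injective) ((Equiv.ofInjective a a.injective).symm ⟨a k, h⟩) : V)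
    = b k
  simp

private lemma Kcount_const {V : Type*} [Fintype V] [DecidableEq V] {s : ℕ} {c : Fin s → ℕ}
    (i j : Fin s) (t t' : Fin 4 ↪ V) :
    Kcount V c i j t = Kcount V c i j t' := by
  obtain ⟨σ, hσ⟩ := exists_perm_comp t t'
  unfold Kcount
  apply Finset.card_bij (fun f _ => f ∘ σ.symm)
  · intro f hf
    simp only [mem_filter] at hf ⊢
    refine ⟨comp_perm_mem σ.symm hf.1, ?_⟩
    have h' : ∀ k : Fin 4, (f ∘ σ.symm) (t' k) = f (t k) := by
      intro k; simp [← hσ k]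
    rw [h' 0, h' 1, h' 2, h' 3]
    exact hf.2
  · intro f1 _ f2 _ h
    funext v
    have := congrFun h (σ v)
    simpa using this
  · intro g hg
    refine ⟨g ∘ σ, ?_, by funext v; simp⟩
    simp only [mem_filter] at hg ⊢
    refine ⟨comp_perm_mem σ hg.1, ?_⟩
    have h' : ∀ k : Fin 4, (g ∘ σ) (t k) = g (t' k) := by
      intro k; simp [hσ k]
    rw [h' 0, h' 1, h' 2, h' 3]
    exact hg.2

private lemma sum_Kcount {V : Type*} [Fintype V] [DecidableEq V] {s : ℕ} {c : Fin s → ℕ}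
    (i j : Fin s) (hij : i ≠ j) :
    ∑ t : Fin 4 ↪ V, Kcount V c i j t
      = (profileColorings V s c).card * ((c i).descFactorial 2 * (c j).descFactorial 2) := by
  have hΦmem : ∀ f ∈ profileColorings V s c, ∀ k,
      (univ.filter fun v => f v = k).card = c k := by
    intro f hf
    simpa [profileColorings] using hf
  unfold Kcount
  simp_rw [Finset.card_filter]
  rw [Finset.sum_comm]
  rw [Finset.sum_congr rfl (fun f hf => ?_), Finset.sum_const, smul_eq_mul]
  show (∑ t : Fin 4 ↪ V, if f (t 0) = i ∧ f (t 1) = i ∧ f (t 2) = j ∧ f (t 3) = j then 1 else 0)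
    = (c i).descFactorial 2 * (c j).descFactorial 2
  rw [← Finset.card_filter, card_quad f i j hij, hΦmem f hf i, hΦmem f hf j]

private lemma descFactorial_mul_Kcount {V : Type*} [Fintype V] [DecidableEq V] {s : ℕ}
    {c : Fin s → ℕ} (i j : Fin s) (hij : i ≠ j) (t : Fin 4 ↪ V) :
    (Fintype.card V).descFactorial 4 * Kcount V c i j t
      = (profileColorings V s c).card * ((c i).descFactorial 2 * (c j).descFactorial 2) := by
  have h2 : ∑ t' : Fin 4 ↪ V, Kcount V c i j t'
      = Fintype.card (Fin 4 ↪ V) * Kcount V c i j t := by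
    rw [Finset.sum_congr rfl (fun t' _ => Kcount_const i j t' t), Finset.sum_const,
      ← Finset.card_univ, smul_eq_mul]
  rw [Fintype.card_embedding_eq, Fintype.card_fin] at h2
  rw [← h2, sum_Kcount i j hij]

private lemma pair_eq_of_card_two {α : Type*} [DecidableEq α] {p : Finset α} (hp : p.card = 2)
    {e1 e2 : α} (h1 : e1 ∈ p) (h2 : e2 ∈ p) (hne : e1 ≠ e2) : p = {e1, e2} := by
  symm
  apply Finset.eq_of_subset_of_card_le
  · intro x hx
    simp only [Finset.mem_insert, Finset.mem_singleton] at hx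
    rcases hx with rfl | rfl <;> assumption
  · rw [hp, Finset.card_pair hne]

private lemma card_share_pairs {V : Type*} [Fintype V] [DecidableEq V] (G : SimpleGraph V)
    [DecidableRel G.Adj] :
    ((G.edgeFinset.offDiag).filter fun p => ∃ v, v ∈ p.1 ∧ v ∈ p.2).card = 2 * pi3 G := by
  have hset : (G.edgeFinset.offDiag).filter (fun p => ∃ v, v ∈ p.1 ∧ v ∈ p.2)
      = ((G.edgeFinset.powersetCard 2).filter fun p => ∃ v, ∀ e ∈ p, v ∈ e).biUnion
          (fun p => p.offDiag) := by
    ext ⟨e1, e2⟩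
    simp only [Finset.mem_filter, Finset.mem_offDiag, Finset.mem_biUnion,
      Finset.mem_powersetCard]
    constructor
    · rintro ⟨⟨h1, h2, hne⟩, v, hv1, hv2⟩
      refine ⟨{e1, e2}, ⟨⟨?_, Finset.card_pair hne⟩, v, ?_⟩, ?_⟩
      · intro x hx
        simp only [Finset.mem_insert, Finset.mem_singleton] at hx
        rcases hx with rfl | rfl <;> assumption
      · intro e he
        simp only [Finset.mem_insert, Finset.mem_singleton] at he
        rcases he with rfl | rfl <;> assumption
      · exact ⟨by simp, by simp, hne⟩
    · rintro ⟨p, ⟨⟨hpsub, hpcard⟩, v, hv⟩, hmem⟩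
      obtain ⟨h1, h2, hne⟩ := hmem
      exact ⟨⟨hpsub h1, hpsub h2, hne⟩, v, hv e1 h1, hv e2 h2⟩
  have hdisj : ∀ p ∈ (G.edgeFinset.powersetCard 2).filter fun p => ∃ v, ∀ e ∈ p, v ∈ e,
      ∀ q ∈ (G.edgeFinset.powersetCard 2).filter fun p => ∃ v, ∀ e ∈ p, v ∈ e,
      p ≠ q → Disjoint p.offDiag q.offDiag := by
    intro p hp q hq hpq
    rw [Finset.disjoint_left]
    rintro ⟨e1, e2⟩ hxp hxq
    simp only [Finset.mem_filter, Finset.mem_powersetCard] at hp hq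
    rw [Finset.mem_offDiag] at hxp hxq
    exact hpq ((pair_eq_of_card_two hp.1.2 hxp.1 hxp.2.1 hxp.2.2).trans
      (pair_eq_of_card_two hq.1.2 hxq.1 hxq.2.1 hxq.2.2).symm)
  rw [hset, Finset.card_biUnion hdisj, pi3]
  rw [Finset.sum_congr rfl (fun p hp => ?_), Finset.sum_const, smul_eq_mul, Nat.mul_comm]
  show p.offDiag.card = 2
  rw [Finset.offDiag_card]
  simp only [Finset.mem_filter, Finset.mem_powersetCard] at hp
  rw [hp.1.2]

private lemma exists_coloring_aux {V : Type*} [Fintype V] [DecidableEq V] :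
    ∀ (s : ℕ) (t : Finset V) (c : Fin (s + 1) → ℕ), (∑ i, c i) = t.card →
    ∃ f : V → Fin (s + 1), ∀ i, (t.filter fun v => f v = i).card = c i := by
  intro s
  induction s with
  | zero =>
    intro t c hsum
    refine ⟨fun _ => 0, fun i => ?_⟩
    have hi : i = 0 := Fin.fin_one_eq_zero i
    subst hi
    simpa using hsum.symm
  | succ k ih =>
    intro t c hsum
    have hle : c (Fin.last (k + 1)) ≤ t.card := by
      rw [← hsum]
      exact Finset.single_le_sum (fun _ _ => Nat.zero_le _) (Finset.mem_univ _)
    obtain ⟨T, hTt, hTcard⟩ := Finset.exists_subset_card_eq hle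
    have hsum' : (∑ i : Fin (k + 1), c i.castSucc) = (t \ T).card := by
      rw [Finset.card_sdiff_of_subset hTt, hTcard]
      have := Fin.sum_univ_castSucc c
      omega
    obtain ⟨f', hf'⟩ := ih (t \ T) (fun i => c i.castSucc) hsum'
    refine ⟨fun v => if v ∈ T then Fin.last (k + 1) else (f' v).castSucc, fun i => ?_⟩
    rcases Fin.eq_castSucc_or_eq_last i with ⟨i', rfl⟩ | rfl
    · rw [← hf' i']
      congr 1
      ext v
      simp only [Finset.mem_filter, Finset.mem_sdiff]
      constructor
      · rintro ⟨hvt, hv⟩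
        by_cases hT : v ∈ T
        · simp only [hT, if_pos] at hv
          exact absurd hv.symm (Fin.ne_last_of_lt (Fin.castSucc_lt_last i'))
        · simp only [hT, if_neg, not_false_iff] at hv
          exact ⟨⟨hvt, hT⟩, Fin.castSucc_injective _ hv⟩
      · rintro ⟨⟨hvt, hT⟩, hv⟩
        refine ⟨hvt, ?_⟩
        simp [hT, hv]
    · rw [← hTcard]
      congr 1
      ext v
      simp only [Finset.mem_filter]
      constructor
      · rintro ⟨hvt, hv⟩
        by_cases hT : v ∈ T
        · exact hT
        · simp only [hT, if_neg, not_false_iff] at hv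
          exact absurd hv (Fin.ne_last_of_lt (Fin.castSucc_lt_last (f' v)))
      · intro hT
        exact ⟨hTt hT, by simp [hT]⟩

end Aux

/-- Under the random coloring model with profile `c`, for distinct colors `i ≠ j`,
`E[Mᵢ·Mⱼ] = 2 · (cᵢ⁽²⁾ cⱼ⁽²⁾ / n⁽⁴⁾) · (C(m,2) − π₃(G))`. -/
theorem expected_product_monoEdges {V : Type*} [Fintype V] [DecidableEq V]
    (G : SimpleGraph V) [DecidableRel G.Adj] (n m s : ℕ)
    (hn : Fintype.card V = n) (hn4 : 4 ≤ n) (hm : G.edgeFinset.card = m)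
    (c : Fin s → ℕ) (hc : ∀ i, 0 < c i) (hsum : ∑ i, c i = n)
    (i j : Fin s) (hij : i ≠ j) :
    expect V c (fun f => (monoEdges G f i : ℝ) * (monoEdges G f j : ℝ)) =
      2 * (((c i).descFactorial 2 : ℝ) * ((c j).descFactorial 2 : ℝ) / (n.descFactorial 4 : ℝ)) *
        ((m.choose 2 : ℝ) - (pi3 G : ℝ)) := by
  classical
  subst hn
  subst hm
  have hs0 : s ≠ 0 := fun h => (h ▸ i).elim0
  obtain ⟨s', rfl⟩ := Nat.exists_eq_succ_of_ne_zero hs0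
  obtain ⟨f0, hf0⟩ := exists_coloring_aux s' (Finset.univ : Finset V) c (by rw [hsum, Finset.card_univ])
  have hf0mem : f0 ∈ profileColorings V (s' + 1) c := by
    simp only [profileColorings, mem_filter, mem_univ, true_and]
    exact hf0
  have hN : 0 < (profileColorings V (s' + 1) c).card := Finset.card_pos.2 ⟨f0, hf0mem⟩
  unfold _root_.expect
  set Φ := profileColorings V (s' + 1) c with hΦdef
  set E := G.edgeFinset with hEdef
  -- step 1: rewrite the product of counts as a count over pairs of edges
  have hprod : ∀ f : V → Fin (s' + 1), monoEdges G f i * monoEdges G f j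
      = ((E ×ˢ E).filter fun p =>
          (∀ v ∈ p.1, f v = i) ∧ (∀ v ∈ p.2, f v = j)).card := by
    intro f
    rw [monoEdges, monoEdges, ← Finset.card_product, ← Finset.filter_product]
  have hS : ∑ f ∈ Φ, monoEdges G f i * monoEdges G f j
      = ∑ p ∈ E ×ˢ E, (Φ.filter fun f =>
          (∀ v ∈ p.1, f v = i) ∧ (∀ v ∈ p.2, f v = j)).card := by
    simp_rw [hprod, Finset.card_filter]
    exact Finset.sum_comm
  -- step 2: pairs sharing a vertex contribute zero
  have hzero : ∑ p ∈ (E ×ˢ E).filter (fun p => ∃ v, v ∈ p.1 ∧ v ∈ p.2),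
      (Φ.filter fun f => (∀ v ∈ p.1, f v = i) ∧ (∀ v ∈ p.2, f v = j)).card = 0 := by
    apply Finset.sum_eq_zero
    intro p hp
    rw [Finset.mem_filter] at hp
    obtain ⟨-, v, hv1, hv2⟩ := hp
    rw [Finset.card_eq_zero, Finset.filter_eq_empty_iff]
    rintro f - ⟨h1, h2⟩
    exact hij ((h1 v hv1).symm.trans (h2 v hv2))
  have hS2 : ∑ f ∈ Φ, monoEdges G f i * monoEdges G f j
      = ∑ p ∈ (E ×ˢ E).filter (fun p => ¬ ∃ v, v ∈ p.1 ∧ v ∈ p.2),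
          (Φ.filter fun f => (∀ v ∈ p.1, f v = i) ∧ (∀ v ∈ p.2, f v = j)).card := by
    rw [hS, ← Finset.sum_filter_add_sum_filter_not (E ×ˢ E)
      (fun p => ∃ v, v ∈ p.1 ∧ v ∈ p.2), hzero, zero_add]
  -- step 3: the key counting identity for a disjoint pair of edges
  have key : ∀ p ∈ (E ×ˢ E).filter (fun p => ¬ ∃ v, v ∈ p.1 ∧ v ∈ p.2),
      (Fintype.card V).descFactorial 4 * (Φ.filter fun f =>
        (∀ v ∈ p.1, f v = i) ∧ (∀ v ∈ p.2, f v = j)).card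
      = Φ.card * ((c i).descFactorial 2 * (c j).descFactorial 2) := by
    rintro ⟨e1, e2⟩ hp
    rw [Finset.mem_filter, Finset.mem_product] at hp
    obtain ⟨⟨he1, he2⟩, hW⟩ := hp
    revert he1 he2 hW
    refine Sym2.inductionOn₂ e1 e2 ?_
    intro a b x y hW he1 he2
    have hab : a ≠ b := (G.mem_edgeSet.1 (SimpleGraph.mem_edgeFinset.1 he1)).ne
    have hxy : x ≠ y := (G.mem_edgeSet.1 (SimpleGraph.mem_edgeFinset.1 he2)).ne
    have hax : a ≠ x := fun h =>
      hW ⟨a, Sym2.mem_mk_left a b, by rw [h]; exact Sym2.mem_mk_left x y⟩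
    have hay : a ≠ y := fun h =>
      hW ⟨a, Sym2.mem_mk_left a b, by rw [h]; exact Sym2.mem_mk_right x y⟩
    have hbx : b ≠ x := fun h =>
      hW ⟨b, Sym2.mem_mk_right a b, by rw [h]; exact Sym2.mem_mk_left x y⟩
    have hby : b ≠ y := fun h =>
      hW ⟨b, Sym2.mem_mk_right a b, by rw [h]; exact Sym2.mem_mk_right x y⟩
    have hcard : (Φ.filter fun f =>
          (∀ v ∈ s(a, b), f v = i) ∧ (∀ v ∈ s(x, y), f v = j)).card
        = Kcount V c i j (quadEmb a b x y hab hax hay hbx hby hxy) := by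
      unfold Kcount
      rw [← hΦdef]
      congr 1
      apply Finset.filter_congr
      intro f _
      rw [quadEmb_apply0, quadEmb_apply1, quadEmb_apply2, quadEmb_apply3]
      simp only [Sym2.mem_iff, forall_eq_or_imp, forall_eq]
      tauto
    rw [hcard, descFactorial_mul_Kcount i j hij]
  -- the natural-number master equation
  set D := ((E ×ˢ E).filter (fun p => ¬ ∃ v, v ∈ p.1 ∧ v ∈ p.2)).card with hDdef
  have hSnat : (Fintype.card V).descFactorial 4
        * ∑ f ∈ Φ, monoEdges G f i * monoEdges G f j
      = D * (Φ.card * ((c i).descFactorial 2 * (c j).descFactorial 2)) := by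
    rw [hS2, Finset.mul_sum, Finset.sum_congr rfl key, Finset.sum_const, smul_eq_mul]
  -- counting the disjoint pairs of edges
  have hDoff : (E ×ˢ E).filter (fun p => ¬ ∃ v, v ∈ p.1 ∧ v ∈ p.2)
      = E.offDiag.filter (fun p => ¬ ∃ v, v ∈ p.1 ∧ v ∈ p.2) := by
    ext p
    simp only [Finset.mem_filter, Finset.mem_product, Finset.mem_offDiag]
    constructor
    · rintro ⟨⟨h1, h2⟩, hW⟩
      exact ⟨⟨h1, h2,
        fun h => hW ⟨p.1.out.1, Sym2.out_fst_mem p.1, h ▸ Sym2.out_fst_mem p.1⟩⟩, hW⟩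
    · rintro ⟨⟨h1, h2, -⟩, hW⟩
      exact ⟨⟨h1, h2⟩, hW⟩
  have hDcount : 2 * pi3 G + D = E.offDiag.card := by
    have h := Finset.card_filter_add_card_filter_not
      (s := E.offDiag) (p := fun p => ∃ v, v ∈ p.1 ∧ v ∈ p.2)
    rw [card_share_pairs G] at h
    rw [hDdef, hDoff]
    exact h
  have hoffcard : E.card + E.offDiag.card = E.card * E.card := by
    have h1 := Finset.card_union_of_disjoint (Finset.disjoint_diag_offDiag E)
    rw [Finset.diag_union_offDiag, Finset.card_product, Finset.diag_card] at h1
    exact h1.symm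
  -- move to the reals
  have hn4R : ((Fintype.card V).descFactorial 4 : ℝ) ≠ 0 := by
    rw [Nat.cast_ne_zero]
    intro h
    rw [Nat.descFactorial_eq_zero_iff_lt] at h
    exact absurd h (Nat.not_lt.2 hn4)
  have hNr : ((Φ.card : ℝ)) ≠ 0 := Nat.cast_ne_zero.2 hN.ne'
  have hcast : ∑ f ∈ Φ, (monoEdges G f i : ℝ) * (monoEdges G f j : ℝ)
      = ((∑ f ∈ Φ, monoEdges G f i * monoEdges G f j : ℕ) : ℝ) := by
    push_cast
    rfl
  have A' : ((Fintype.card V).descFactorial 4 : ℝ)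
        * ((∑ f ∈ Φ, monoEdges G f i * monoEdges G f j : ℕ) : ℝ)
      = (D : ℝ) * ((Φ.card : ℝ) * (((c i).descFactorial 2 : ℝ) * ((c j).descFactorial 2 : ℝ))) := by
    exact_mod_cast hSnat
  have B' : 2 * (pi3 G : ℝ) + (D : ℝ) = (E.offDiag.card : ℝ) := by exact_mod_cast hDcount
  have C' : (E.card : ℝ) + (E.offDiag.card : ℝ) = (E.card : ℝ) * (E.card : ℝ) := by
    exact_mod_cast hoffcard
  have hch : ((E.card.choose 2 : ℕ) : ℝ) = (E.card : ℝ) * ((E.card : ℝ) - 1) / 2 :=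
    Nat.cast_choose_two (K := ℝ) E.card
  have hD' : (D : ℝ) = 2 * (((E.card.choose 2 : ℕ) : ℝ) - (pi3 G : ℝ)) := by
    rw [hch]
    linarith [B', C']
  have main : ((∑ f ∈ Φ, monoEdges G f i * monoEdges G f j : ℕ) : ℝ)
        * ((Fintype.card V).descFactorial 4 : ℝ)
      = 2 * (((c i).descFactorial 2 : ℝ) * ((c j).descFactorial 2 : ℝ))
        * (((E.card.choose 2 : ℕ) : ℝ) - (pi3 G : ℝ)) * (Φ.card : ℝ) := by
    linear_combination A' + ((Φ.card : ℝ) * (((c i).descFactorial 2 : ℝ)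
      * ((c j).descFactorial 2 : ℝ))) * hD'
  show (∑ f ∈ Φ, (monoEdges G f i : ℝ) * (monoEdges G f j : ℝ)) / (Φ.card : ℝ) = _
  rw [hcast, div_eq_iff hNr]
  calc ((∑ f ∈ Φ, monoEdges G f i * monoEdges G f j : ℕ) : ℝ)
      = ((∑ f ∈ Φ, monoEdges G f i * monoEdges G f j : ℕ) : ℝ)
          * ((Fintype.card V).descFactorial 4 : ℝ) / ((Fintype.card V).descFactorial 4 : ℝ) := by
        rw [mul_div_cancel_right₀ _ hn4R]
    _ = 2 * (((c i).descFactorial 2 : ℝ) * ((c j).descFactorial 2 : ℝ))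
          * (((E.card.choose 2 : ℕ) : ℝ) - (pi3 G : ℝ)) * (Φ.card : ℝ)
          / ((Fintype.card V).descFactorial 4 : ℝ) := by rw [main]
    _ = 2 * (((c i).descFactorial 2 : ℝ) * ((c j).descFactorial 2 : ℝ)
          / ((Fintype.card V).descFactorial 4 : ℝ))
          * (((E.card.choose 2 : ℕ) : ℝ) - (pi3 G : ℝ)) * (Φ.card : ℝ) := by ring
end

section
/- Let G be a finite simple graph on n ≥ 4 vertices with m ≥ 1 edges, let δ₁ = 2m/n and δ₂ = (Σ_v deg(v)²)/n, let υ(G) = (δ₂ − δ₁²)/δ₁ be the index of dispersion of the degree distribution of G, and let ρ(G) = m/binom(n,2) be the edge density of G. Then γ(G) ≤ 0 if and only if υ(G) ≥ (1 − ρ(G))/2. -/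
set_option maxHeartbeats 1000000



open Finset

lemma pi3_eq_sum_choose {V : Type*} [Fintype V] [DecidableEq V] (G : SimpleGraph V)
    [DecidableRel G.Adj] : pi3 G = ∑ v, (G.degree v).choose 2 := by
  classical
  have hmem : ∀ (v : V) (e : Sym2 V),
      e ∈ G.incidenceFinset v ↔ e ∈ G.edgeFinset ∧ v ∈ e := by
    intro v e
    simp [SimpleGraph.mem_incidenceFinset, SimpleGraph.incidenceSet,
      SimpleGraph.mem_edgeFinset, Set.mem_setOf_eq]
  have hset : (G.edgeFinset.powersetCard 2).filter (fun p => ∃ v, ∀ e ∈ p, v ∈ e)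
      = Finset.univ.biUnion fun v => (G.incidenceFinset v).powersetCard 2 := by
    ext p
    simp only [mem_filter, mem_powersetCard, mem_biUnion, mem_univ, true_and]
    constructor
    · rintro ⟨⟨hsub, hcard⟩, v, hv⟩
      exact ⟨v, fun e he => (hmem v e).mpr ⟨hsub he, hv e he⟩, hcard⟩
    · rintro ⟨v, hp⟩
      exact ⟨⟨fun e he => ((hmem v e).mp (hp.1 he)).1, hp.2⟩,
        v, fun e he => ((hmem v e).mp (hp.1 he)).2⟩
  have hdisj : ∀ v ∈ (Finset.univ : Finset V), ∀ w ∈ (Finset.univ : Finset V), v ≠ w →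
      Disjoint ((G.incidenceFinset v).powersetCard 2) ((G.incidenceFinset w).powersetCard 2) := by
    intro v _ w _ hvw
    rw [Finset.disjoint_left]
    intro p hpv hpw
    rw [mem_powersetCard] at hpv hpw
    obtain ⟨e, f, hef, rfl⟩ := Finset.card_eq_two.mp hpv.2
    have hev := ((hmem v e).mp (hpv.1 (by simp))).2
    have hfv := ((hmem v f).mp (hpv.1 (by simp))).2
    have hew := ((hmem w e).mp (hpw.1 (by simp))).2
    have hfw := ((hmem w f).mp (hpw.1 (by simp))).2
    have he : e = s(v, w) := (Sym2.mem_and_mem_iff hvw).mp ⟨hev, hew⟩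
    have hf : f = s(v, w) := (Sym2.mem_and_mem_iff hvw).mp ⟨hfv, hfw⟩
    exact hef (he.trans hf.symm)
  unfold pi3
  rw [hset, Finset.card_biUnion hdisj]
  refine Finset.sum_congr rfl fun v _ => ?_
  rw [Finset.card_powersetCard, SimpleGraph.card_incidenceFinset_eq_degree]

/-- With `δ₁ = 2m/n`, `δ₂ = (Σ_v deg(v)²)/n`, index of dispersion `υ(G) = (δ₂ − δ₁²)/δ₁` and
edge density `ρ(G) = m/C(n,2)`: `γ(G) ≤ 0` if and only if `υ(G) ≥ (1 − ρ(G))/2`. -/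
theorem gammaG_nonpos_iff_overdispersed {V : Type*} [Fintype V] [DecidableEq V]
    (G : SimpleGraph V) [DecidableRel G.Adj] (n m : ℕ)
    (hn : Fintype.card V = n) (hn4 : 4 ≤ n) (hm : G.edgeFinset.card = m) (hm1 : 1 ≤ m)
    (d1 d2 υ ρ : ℝ) (hd1 : d1 = 2 * (m : ℝ) / (n : ℝ))
    (hd2 : d2 = (∑ v, (G.degree v : ℝ) ^ 2) / (n : ℝ))
    (hυ : υ = (d2 - d1 ^ 2) / d1) (hρ : ρ = (m : ℝ) / (n.choose 2 : ℝ)) :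
    gammaG G ≤ 0 ↔ (1 - ρ) / 2 ≤ υ := by
  classical
  set S := ∑ v, (G.degree v : ℝ) ^ 2 with hS
  have hN4 : (4:ℝ) ≤ (n:ℝ) := by exact_mod_cast hn4
  have hM1 : (1:ℝ) ≤ (m:ℝ) := by exact_mod_cast hm1
  have hN0 : (n:ℝ) ≠ 0 := by linarith
  have hN1 : (n:ℝ) - 1 ≠ 0 := by intro h; linarith
  have hN2 : (n:ℝ) - 2 ≠ 0 := by intro h; linarith
  have hN3 : (n:ℝ) - 3 ≠ 0 := by intro h; linarith
  have hM0 : (m:ℝ) ≠ 0 := by linarith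
  have hhand : (∑ v, (G.degree v : ℝ)) = 2 * m := by
    have h := G.sum_degrees_eq_twice_card_edges
    rw [hm] at h
    exact_mod_cast congrArg (Nat.cast : ℕ → ℝ) h
  have hπ : (pi3 G : ℝ) = (S - 2 * m) / 2 := by
    have h2 : (2:ℝ) * (pi3 G : ℝ) = S - 2 * m := by
      rw [pi3_eq_sum_choose]
      push_cast [Nat.cast_choose_two]
      calc 2 * ∑ v, (G.degree v : ℝ) * ((G.degree v : ℝ) - 1) / 2
          = ∑ v, ((G.degree v : ℝ)^2 - (G.degree v : ℝ)) := by
            rw [Finset.mul_sum]; exact Finset.sum_congr rfl fun v _ => by ring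
        _ = S - ∑ v, (G.degree v : ℝ) := by rw [Finset.sum_sub_distrib, hS]
        _ = S - 2 * m := by rw [hhand]
    linarith
  have hd4 : ((n.descFactorial 4 : ℕ) : ℝ) = n * ((n:ℝ)-1) * ((n:ℝ)-2) * ((n:ℝ)-3) := by
    have h1 : (1:ℕ) ≤ n := by omega
    have h2 : (2:ℕ) ≤ n := by omega
    have h3 : (3:ℕ) ≤ n := by omega
    have : n.descFactorial 4 = (n-3) * ((n-2) * ((n-1) * n)) := by
      simp [Nat.descFactorial]
    rw [this]
    push_cast [Nat.cast_sub h1, Nat.cast_sub h2, Nat.cast_sub h3]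
    ring
  have hd2' : ((n.descFactorial 2 : ℕ) : ℝ) = n * ((n:ℝ)-1) := by
    have h1 : (1:ℕ) ≤ n := by omega
    have : n.descFactorial 2 = (n-1) * n := by simp [Nat.descFactorial]
    rw [this]
    push_cast [Nat.cast_sub h1]
    ring
  set K : ℝ := (n:ℝ) * ((n:ℝ)-1) * S - (m:ℝ)^2 * (4*(n:ℝ) - 6) - (m:ℝ) * n * ((n:ℝ)-1)
    with hK
  have hγ : gammaG G = -(K / ((n:ℝ)^2 * ((n:ℝ)-1)^2 * ((n:ℝ)-2) * ((n:ℝ)-3))) := by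
    unfold gammaG
    rw [hn, hm, hd4, hd2', hπ, Nat.cast_choose_two, hK]
    field_simp
    ring
  have hDpos : (0:ℝ) < (n:ℝ)^2 * ((n:ℝ)-1)^2 * ((n:ℝ)-2) * ((n:ℝ)-3) := by
    have h0 : (0:ℝ) < (n:ℝ) := by linarith
    apply mul_pos (mul_pos (mul_pos (by nlinarith) (by nlinarith)) (by linarith)) (by linarith)
  have h1 : gammaG G ≤ 0 ↔ 0 ≤ K := by
    rw [hγ, neg_nonpos, le_div_iff₀ hDpos, zero_mul]
  have hEpos : (0:ℝ) < 2 * (m:ℝ) * n * ((n:ℝ)-1) := by nlinarith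
  have hE : υ - (1 - ρ)/2 = K / (2 * (m:ℝ) * n * ((n:ℝ)-1)) := by
    rw [hυ, hd2, hd1, hρ, Nat.cast_choose_two, hK]
    field_simp
    ring
  have h2 : (1 - ρ)/2 ≤ υ ↔ 0 ≤ K := by
    rw [← sub_nonneg, hE, le_div_iff₀ hEpos, zero_mul]
  rw [h1, h2]
end
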